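/- For k ≥ 2, the densities of the sets of γ-primitive elements converge uniformly in γ: for every ε > 0 there exists r(ε) such that for all r ≥ r(ε) and all 1 ≤ γ ≤ r, |ρ_r(P_{k,γ}) − 1/(γ^k ζ(k))| ≤ ε/γ^{k−1}. -/

import Mathlib

/-- Ball density of a set of integer `k`-tuples at radius `r` (sup-norm ball). -/
noncomputable def rhoZ (k : ℕ) (S : Set (Fin k → ℤ)) (r : ℕ) : ℝ :=
  (Nat.card {v : Fin k → ℤ // (∀ i, |v i| ≤ (r : ℤ)) ∧ v ∈ S} : ℝ) / (2 * r + 1) ^ k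

/-- The Riemann zeta function at a natural number `s` (as a real series). -/
noncomputable def zetaR (s : ℕ) : ℝ := ∑' n : ℕ, 1 / ((n : ℝ) + 1) ^ s

/-!
Möbius inversion over the divisors of `gcd v` gives
`ρ_r(P_{k,1}) = ∑_d μ(d) ((2⌊r/d⌋ + 1)^k - 1) / (2r + 1)^k`. For fixed `d` the `d`-th term
tends to `μ(d)/d^k`, and it is dominated by `(2/d)^k`, which is summable for `k ≥ 2`; by
Tannery's theorem `ρ_r(P_{k,1}) → ∑ μ(d)/d^k = 1/ζ(k)`. Scaling by `γ` identifies
`P_{k,γ} ∩ B_r` with `P_{k,1} ∩ B_{⌊r/γ⌋}`, so `γ^k ρ_r(P_{k,γ}) → 1/ζ(k)` for each fixed `γ`,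
and `γ^k ρ_r(P_{k,γ}) ≤ 2^k` whenever `γ ≤ r`. The required bound
`|γ^k ρ_r(P_{k,γ}) - 1/ζ(k)| ≤ εγ` is then automatic for `γ ≥ (2^k + 1/ζ(k))/ε`, leaving
finitely many `γ`, each handled by its own limit.
-/

open Finset Filter Topology ArithmeticFunction
open scoped ArithmeticFunction.Moebius

lemma sum_moebius_ite_dvd {n : ℕ} (hn : n ≠ 0) {s : Finset ℕ} (hs : n.divisors ⊆ s) :
    ∑ d ∈ s, (if d ∣ n then μ d else 0) = if n = 1 then 1 else 0 := by
  have hfilter : {d ∈ s | d ∣ n} = n.divisors := by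
    ext d
    rw [mem_filter, Nat.mem_divisors]
    exact ⟨fun h ↦ ⟨h.2, hn⟩, fun h ↦ ⟨hs (Nat.mem_divisors.2 h), h.1⟩⟩
  rw [← sum_filter, hfilter, ← coe_mul_zeta_apply, moebius_mul_coe_zeta, one_apply]

section IntBox

variable {ι : Type*}

lemma natCast_smul_injective {d : ℕ} (hd : d ≠ 0) :
    Function.Injective ((d : ℤ) • · : (ι → ℤ) → ι → ℤ) :=
  smul_right_injective _ (by omega)

lemma gcd_natCast_smul [Fintype ι] (d : ℕ) (w : ι → ℤ) :
    univ.gcd ((d : ℤ) • w) = d * univ.gcd w := by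
  rw [← Int.normalize_of_nonneg (Nat.cast_nonneg d), ← Finset.gcd_mul_left,
    Int.normalize_of_nonneg (Nat.cast_nonneg d)]
  rfl

variable [Fintype ι] [DecidableEq ι]

variable (ι) in
noncomputable def intBox (r : ℕ) : Finset (ι → ℤ) :=
  Fintype.piFinset fun _ ↦ Icc (-(r : ℤ)) r

lemma mem_intBox {r : ℕ} {v : ι → ℤ} : v ∈ intBox ι r ↔ ∀ i, |v i| ≤ r := by
  simp only [intBox, Fintype.mem_piFinset, mem_Icc, abs_le]

variable (ι) in
lemma card_intBox (r : ℕ) : #(intBox ι r) = (2 * r + 1) ^ Fintype.card ι := by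
  rw [intBox, Fintype.card_piFinset, prod_const, Int.card_Icc, card_univ]
  congr 1
  omega

lemma abs_natCast_mul_le_iff {d r : ℕ} (hd : d ≠ 0) {c : ℤ} :
    |(d : ℤ) * c| ≤ r ↔ |c| ≤ (r / d : ℕ) := by
  rw [abs_mul, Nat.abs_cast, Int.natCast_div, Int.le_ediv_iff_mul_le (by omega), mul_comm]

lemma intBox_filter_dvd {d : ℕ} (hd : d ≠ 0) (r : ℕ) :
    {v ∈ intBox ι r | ∀ i, (d : ℤ) ∣ v i} = (intBox ι (r / d)).image ((d : ℤ) • ·) := by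
  ext v
  simp only [mem_filter, mem_image, mem_intBox]
  constructor
  · rintro ⟨hv, hdvd⟩
    choose w hw using hdvd
    refine ⟨w, fun i ↦ ?_, funext fun i ↦ (hw i).symm⟩
    rw [← abs_natCast_mul_le_iff hd, ← hw]
    exact hv i
  · rintro ⟨w, hw, rfl⟩
    exact ⟨fun i ↦ (abs_natCast_mul_le_iff hd).2 (hw i), fun i ↦ dvd_mul_right _ _⟩

lemma card_intBox_filter_dvd {d : ℕ} (hd : d ≠ 0) (r : ℕ) :
    #{v ∈ intBox ι r | ∀ i, (d : ℤ) ∣ v i} = (2 * (r / d) + 1) ^ Fintype.card ι := by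
  rw [intBox_filter_dvd hd, card_image_of_injective _ (natCast_smul_injective hd), card_intBox]

lemma card_intBox_filter_gcd_eq {γ : ℕ} (hγ : γ ≠ 0) (r : ℕ) :
    #{v ∈ intBox ι r | univ.gcd v = (γ : ℤ)} = #{w ∈ intBox ι (r / γ) | univ.gcd w = 1} := by
  have hdvd : {v ∈ intBox ι r | univ.gcd v = (γ : ℤ)} =
      {v ∈ {v ∈ intBox ι r | ∀ i, (γ : ℤ) ∣ v i} | univ.gcd v = (γ : ℤ)} := by
    rw [filter_filter]
    refine filter_congr fun v _ ↦ ⟨fun h ↦ ⟨fun i ↦ h ▸ gcd_dvd (mem_univ i), h⟩, And.right⟩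
  rw [hdvd, intBox_filter_dvd hγ, filter_image,
    card_image_of_injective _ (natCast_smul_injective hγ)]
  congr 1
  refine filter_congr fun w _ ↦ ?_
  rw [gcd_natCast_smul, mul_eq_left₀ (by omega)]

lemma natAbs_gcd_le_of_mem_intBox {r : ℕ} {v : ι → ℤ} (hv : v ∈ intBox ι r) (hv0 : v ≠ 0) :
    (univ.gcd v).natAbs ≤ r := by
  obtain ⟨i, hi⟩ := Function.ne_iff.1 hv0
  have hdvd : (univ.gcd v).natAbs ∣ (v i).natAbs :=
    Int.natAbs_dvd_natAbs.2 (gcd_dvd (mem_univ i))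
  have hvi : ((v i).natAbs : ℤ) ≤ r := Int.natCast_natAbs (v i) ▸ mem_intBox.1 hv i
  exact (Nat.le_of_dvd (Int.natAbs_pos.2 hi) hdvd).trans (by omega)

lemma ite_gcd_eq_one_eq_sum_moebius {r : ℕ} {v : ι → ℤ} (hv : v ∈ intBox ι r) (hv0 : v ≠ 0) :
    (if univ.gcd v = 1 then 1 else 0 : ℤ) =
      ∑ d ∈ Icc 1 r, if ∀ i, (d : ℤ) ∣ v i then μ d else 0 := by
  set g := (univ.gcd v).natAbs
  have hg : univ.gcd v = g :=
    (Int.natAbs_of_nonneg (Int.nonneg_of_normalize_eq_self normalize_gcd)).symm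
  have hg0 : g ≠ 0 := by
    rw [Ne, Int.natAbs_eq_zero, Finset.gcd_eq_zero_iff]
    exact fun h ↦ hv0 (funext fun i ↦ h i (mem_univ i))
  have hdivisors : g.divisors ⊆ Icc 1 r := fun d hd ↦ mem_Icc.2
    ⟨Nat.pos_of_mem_divisors hd,
      (Nat.divisor_le hd).trans (natAbs_gcd_le_of_mem_intBox hv hv0)⟩
  have hdvd (d : ℕ) : (∀ i, (d : ℤ) ∣ v i) ↔ d ∣ g := by
    rw [← Int.natCast_dvd_natCast, ← hg, Finset.dvd_gcd_iff]
    simp only [mem_univ, true_imp_iff]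
  simp_rw [hdvd, sum_moebius_ite_dvd hg0 hdivisors, hg, Nat.cast_eq_one]

lemma card_intBox_filter_gcd_eq_one (r : ℕ) :
    (#{v ∈ intBox ι r | univ.gcd v = 1} : ℤ) =
      ∑ d ∈ Icc 1 r, μ d * (((2 * (r / d) + 1) ^ Fintype.card ι : ℕ) - 1) := by
  -- every `d` divides the zero vector, whose gcd is `0`, so it is set aside
  set B := (intBox ι r).erase 0
  have hzero : {v ∈ intBox ι r | univ.gcd v = 1} = {v ∈ B | univ.gcd v = 1} := by
    have hgcd : univ.gcd (0 : ι → ℤ) = 0 := Finset.gcd_eq_zero_iff.2 fun _ _ ↦ rfl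
    rw [filter_erase, erase_eq_of_notMem]
    simp [hgcd]
  have hcard (d : ℕ) (hd : d ∈ Icc 1 r) :
      (#{v ∈ B | ∀ i, (d : ℤ) ∣ v i} : ℤ) = ((2 * (r / d) + 1) ^ Fintype.card ι : ℕ) - 1 := by
    have h0 : (0 : ι → ℤ) ∈ {v ∈ intBox ι r | ∀ i, (d : ℤ) ∣ v i} := by simp [mem_intBox]
    rw [filter_erase, ← card_intBox_filter_dvd (Nat.one_le_iff_ne_zero.1 (mem_Icc.1 hd).1),
      ← card_erase_add_one h0]
    simp
  calc (#{v ∈ intBox ι r | univ.gcd v = 1} : ℤ)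
      = ∑ v ∈ B, if univ.gcd v = 1 then 1 else 0 := by rw [hzero, card_filter, Nat.cast_sum]; simp
    _ = ∑ v ∈ B, ∑ d ∈ Icc 1 r, if ∀ i, (d : ℤ) ∣ v i then μ d else 0 :=
        sum_congr rfl fun v hv ↦
          ite_gcd_eq_one_eq_sum_moebius (mem_erase.1 hv).2 (mem_erase.1 hv).1
    _ = ∑ d ∈ Icc 1 r, ∑ v ∈ B, if ∀ i, (d : ℤ) ∣ v i then μ d else 0 := sum_comm
    _ = _ := sum_congr rfl fun d hd ↦ by
        rw [← sum_filter, sum_const, nsmul_eq_mul, mul_comm, hcard d hd]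

end IntBox

lemma rhoZ_eq_card_filter (k : ℕ) (S : Set (Fin k → ℤ)) [DecidablePred (· ∈ S)] (r : ℕ) :
    rhoZ k S r = #{v ∈ intBox (Fin k) r | v ∈ S} / (2 * r + 1) ^ k := by
  rw [rhoZ, ← Nat.card_eq_finsetCard]
  congr 2
  exact Nat.card_congr (Equiv.subtypeEquivRight fun v ↦ by simp [mem_intBox])

lemma rhoZ_nonneg (k : ℕ) (S : Set (Fin k → ℤ)) (r : ℕ) : 0 ≤ rhoZ k S r := by
  unfold rhoZ; positivity

lemma rhoZ_le_one (k : ℕ) (S : Set (Fin k → ℤ)) (r : ℕ) : rhoZ k S r ≤ 1 := by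
  classical
  rw [rhoZ_eq_card_filter, div_le_one (by positivity)]
  calc (#{v ∈ intBox (Fin k) r | v ∈ S} : ℝ) ≤ #(intBox (Fin k) r) := by
        exact_mod_cast card_filter_le _ _
    _ = (2 * r + 1) ^ k := by simp [card_intBox]

noncomputable def boxSideRatio (r d : ℕ) : ℝ := (2 * (r / d) + 1 : ℕ) / (2 * r + 1)

lemma boxSideRatio_nonneg (r d : ℕ) : 0 ≤ boxSideRatio r d := by
  unfold boxSideRatio; positivity

lemma natCast_mul_boxSideRatio_le_two {r d : ℕ} (hd : d ≤ r) : d * boxSideRatio r d ≤ 2 := by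
  have h : (r / d * d : ℕ) ≤ (r : ℝ) := by exact_mod_cast Nat.div_mul_le_self r d
  rw [boxSideRatio, mul_div_assoc', div_le_iff₀ (by positivity)]
  push_cast at h ⊢
  have : (d : ℝ) ≤ r := by exact_mod_cast hd
  nlinarith

lemma tendsto_boxSideRatio {d : ℕ} (hd : d ≠ 0) :
    Tendsto (boxSideRatio · d) atTop (𝓝 (d : ℝ)⁻¹) := by
  have hdR : (0 : ℝ) < d := by positivity
  refine tendsto_iff_dist_tendsto_zero.2 (squeeze_zero (fun _ ↦ dist_nonneg) (fun r ↦ ?_)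
    tendsto_one_div_add_atTop_nhds_zero_nat)
  have hlo : (r / d * d : ℕ) ≤ (r : ℝ) := by exact_mod_cast Nat.div_mul_le_self r d
  have hhi : (r : ℝ) + 1 ≤ (r / d * d + d : ℕ) := by
    exact_mod_cast Nat.lt_div_mul_add (Nat.pos_of_ne_zero hd)
  have hD : (0 : ℝ) < 2 * r + 1 := by positivity
  have hnum : |((2 * (r / d) + 1 : ℕ) : ℝ) * d - (2 * r + 1)| ≤ d := by
    push_cast at hlo hhi ⊢
    rw [abs_le]
    constructor <;> nlinarith
  calc dist (boxSideRatio r d) (d : ℝ)⁻¹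
      = |((2 * (r / d) + 1 : ℕ) : ℝ) * d - (2 * r + 1)| / ((2 * r + 1) * d) := by
        rw [Real.dist_eq, boxSideRatio, inv_eq_one_div, div_sub_div _ _ hD.ne' hdR.ne', mul_one,
          abs_div, abs_of_pos (mul_pos hD hdR)]
    _ ≤ d / ((2 * r + 1) * d) := by gcongr
    _ = 1 / (2 * r + 1) := by field_simp
    _ ≤ 1 / (r + 1) := by gcongr; linarith

noncomputable def moebiusBoxTerm (k r d : ℕ) : ℝ :=
  μ d * (boxSideRatio r d ^ k - ((2 * r + 1 : ℝ) ^ k)⁻¹)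

lemma moebiusBoxTerm_eq_zero {k r d : ℕ} (hd : r / d = 0) : moebiusBoxTerm k r d = 0 := by
  simp [moebiusBoxTerm, boxSideRatio, hd]

lemma rhoZ_gcd_eq_one_eq_tsum (k r : ℕ) :
    rhoZ k {v | univ.gcd v = 1} r = ∑' d, moebiusBoxTerm k r d := by
  rw [tsum_eq_sum (s := Icc 1 r) fun d hd ↦ moebiusBoxTerm_eq_zero ?_]
  swap
  · rw [mem_Icc, not_and_or, not_le, not_le, Nat.lt_one_iff] at hd
    exact Nat.div_eq_zero_iff.2 hd
  have hcount := congrArg (Int.cast : ℤ → ℝ) (card_intBox_filter_gcd_eq_one (ι := Fin k) r)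
  simp only [Int.cast_natCast, Int.cast_sum, Int.cast_mul, Int.cast_sub, Int.cast_one,
    Fintype.card_fin] at hcount
  simp only [rhoZ_eq_card_filter, Set.mem_ofPred_eq]
  rw [hcount, sum_div]
  refine sum_congr rfl fun d _ ↦ ?_
  rw [moebiusBoxTerm, boxSideRatio, div_pow, Nat.cast_pow]
  field_simp

lemma abs_moebiusBoxTerm_le (k r d : ℕ) : |moebiusBoxTerm k r d| ≤ 2 ^ k / d ^ k := by
  rcases eq_or_ne (r / d) 0 with hrd | hrd
  · rw [moebiusBoxTerm_eq_zero hrd, abs_zero]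
    positivity
  obtain ⟨hd, hdr⟩ := Nat.div_ne_zero_iff.1 hrd
  have hratio : boxSideRatio r d ≤ 2 / d := by
    rw [le_div_iff₀' (by positivity)]
    exact natCast_mul_boxSideRatio_le_two hdr
  have hlow : ((2 * r + 1 : ℝ) ^ k)⁻¹ ≤ boxSideRatio r d ^ k := by
    rw [← inv_pow, boxSideRatio, inv_eq_one_div]
    gcongr
    exact_mod_cast Nat.le_add_left 1 _
  have hμ : |(μ d : ℝ)| ≤ 1 := by exact_mod_cast abs_moebius_le_one
  calc |moebiusBoxTerm k r d|
      = |(μ d : ℝ)| * |boxSideRatio r d ^ k - ((2 * r + 1 : ℝ) ^ k)⁻¹| := by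
        rw [moebiusBoxTerm, abs_mul]
    _ ≤ |boxSideRatio r d ^ k - ((2 * r + 1 : ℝ) ^ k)⁻¹| :=
        mul_le_of_le_one_left (abs_nonneg _) hμ
    _ ≤ boxSideRatio r d ^ k :=
        abs_sub_le_of_nonneg_of_le (pow_nonneg (boxSideRatio_nonneg r d) k) le_rfl
          (by positivity) hlow
    _ ≤ 2 ^ k / d ^ k := by
        rw [← div_pow]
        exact pow_le_pow_left₀ (boxSideRatio_nonneg r d) hratio k

lemma tendsto_moebiusBoxTerm {k : ℕ} (hk : k ≠ 0) (d : ℕ) :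
    Tendsto (moebiusBoxTerm k · d) atTop (𝓝 (μ d / d ^ k)) := by
  rcases eq_or_ne d 0 with rfl | hd
  · simp [moebiusBoxTerm]
  have hD : Tendsto (fun r : ℕ ↦ ((2 * r + 1 : ℝ) ^ k)⁻¹) atTop (𝓝 0) :=
    tendsto_inv_atTop_zero.comp <| (tendsto_pow_atTop hk).comp <|
      tendsto_atTop_add_const_right _ 1 <|
        tendsto_natCast_atTop_atTop.const_mul_atTop two_pos
  have h := (((tendsto_boxSideRatio hd).pow k).sub hD).const_mul (μ d : ℝ)
  rwa [sub_zero, inv_pow, ← div_eq_mul_inv] at h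

open scoped LSeries.notation ArithmeticFunction.zeta in
lemma tsum_moebius_div_pow {k : ℕ} (hk : 2 ≤ k) : ∑' d : ℕ, (μ d : ℝ) / d ^ k = 1 / zetaR k := by
  have hs : 1 < (k : ℂ).re := by simp only [Complex.natCast_re]; exact_mod_cast hk
  have hcpow (n : ℕ) : (n : ℂ) ^ (k : ℂ) = (n : ℂ) ^ k := Complex.cpow_natCast _ k
  have hζ : L ↗ζ k = zetaR k := by
    rw [LSeries, (LSeriesSummable_zeta_iff.2 hs).tsum_eq_zero_add, LSeries.term_zero, zero_add,
      zetaR, Complex.ofReal_tsum]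
    refine tsum_congr fun n ↦ ?_
    rw [LSeries.term_of_ne_zero n.succ_ne_zero, hcpow]
    simp
  have hμ : L ↗μ k = ↑(∑' d : ℕ, (μ d : ℝ) / d ^ k) := by
    rw [LSeries, Complex.ofReal_tsum]
    refine tsum_congr fun n ↦ ?_
    rcases eq_or_ne n 0 with rfl | hn
    · simp
    · rw [LSeries.term_of_ne_zero hn, hcpow]
      push_cast
      rfl
  have h := LSeries_zeta_mul_Lseries_moebius hs
  rw [hζ, hμ] at h
  exact eq_one_div_of_mul_eq_one_right (by exact_mod_cast h)

lemma tendsto_rhoZ_gcd_eq_one {k : ℕ} (hk : 2 ≤ k) :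
    Tendsto (rhoZ k {v | univ.gcd v = 1}) atTop (𝓝 (1 / zetaR k)) := by
  have hsum : Summable fun d : ℕ ↦ (2 : ℝ) ^ k / d ^ k := by
    simpa only [mul_one_div] using (Real.summable_one_div_nat_pow.2 hk).mul_left ((2 : ℝ) ^ k)
  rw [← tsum_moebius_div_pow hk, funext (rhoZ_gcd_eq_one_eq_tsum k)]
  exact tendsto_tsum_of_dominated_convergence hsum (tendsto_moebiusBoxTerm (by omega))
    (.of_forall fun r d ↦ abs_moebiusBoxTerm_le k r d)

lemma rhoZ_gcd_eq {k γ : ℕ} (hγ : γ ≠ 0) (r : ℕ) :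
    rhoZ k {v | univ.gcd v = (γ : ℤ)} r =
      rhoZ k {v | univ.gcd v = 1} (r / γ) * boxSideRatio r γ ^ k := by
  simp only [rhoZ_eq_card_filter, Set.mem_ofPred_eq, card_intBox_filter_gcd_eq hγ, boxSideRatio,
    div_pow]
  push_cast
  field_simp

lemma tendsto_pow_mul_rhoZ_gcd_eq {k γ : ℕ} (hk : 2 ≤ k) (hγ : γ ≠ 0) :
    Tendsto (fun r ↦ (γ : ℝ) ^ k * rhoZ k {v | univ.gcd v = (γ : ℤ)} r) atTop
      (𝓝 (1 / zetaR k)) := by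
  have h := ((tendsto_rhoZ_gcd_eq_one hk).comp (Nat.tendsto_div_const_atTop hγ)).mul
    (((tendsto_boxSideRatio hγ).const_mul (γ : ℝ)).pow k)
  rw [mul_inv_cancel₀ (by exact_mod_cast hγ), one_pow, mul_one] at h
  refine h.congr fun r ↦ ?_
  rw [Function.comp_apply, rhoZ_gcd_eq hγ, mul_pow]
  ring

lemma abs_pow_mul_rhoZ_gcd_eq_le {k γ r : ℕ} (hγ : γ ≠ 0) (hγr : γ ≤ r) :
    |(γ : ℝ) ^ k * rhoZ k {v | univ.gcd v = (γ : ℤ)} r| ≤ 2 ^ k := by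
  have hnn : 0 ≤ (γ : ℝ) * boxSideRatio r γ :=
    mul_nonneg (Nat.cast_nonneg γ) (boxSideRatio_nonneg r γ)
  rw [abs_of_nonneg (mul_nonneg (by positivity) (rhoZ_nonneg _ _ _)), rhoZ_gcd_eq hγ,
    mul_left_comm, ← mul_pow]
  exact (mul_le_of_le_one_left (pow_nonneg hnn k) (rhoZ_le_one _ _ _)).trans
    (pow_le_pow_left₀ hnn (natCast_mul_boxSideRatio_le_two hγr) k)

lemma eventually_abs_sub_le_mul_of_tendsto {F : ℕ → ℕ → ℝ} {L C : ℝ}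
    (hlim : ∀ γ, 1 ≤ γ → Tendsto (F γ) atTop (𝓝 L))
    (hbdd : ∀ r γ, 1 ≤ γ → γ ≤ r → |F γ r| ≤ C) {ε : ℝ} (hε : 0 < ε) :
    ∀ᶠ r in atTop, ∀ γ, 1 ≤ γ → γ ≤ r → |F γ r - L| ≤ ε * γ := by
  obtain ⟨Γ, hΓ⟩ := exists_nat_ge ((C + |L|) / ε)
  have hsmall : ∀ᶠ r in atTop, ∀ γ ∈ Ico 1 Γ, |F γ r - L| ≤ ε :=
    (eventually_all_finset _).2 fun γ hγ ↦
      (hlim γ (mem_Ico.1 hγ).1).eventually (Metric.closedBall_mem_nhds L hε)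
  filter_upwards [hsmall] with r hr γ hγ hγr
  rcases lt_or_ge γ Γ with hγΓ | hΓγ
  · calc |F γ r - L| ≤ ε := hr γ (mem_Ico.2 ⟨hγ, hγΓ⟩)
      _ ≤ ε * γ := le_mul_of_one_le_right hε.le (by exact_mod_cast hγ)
  · calc |F γ r - L| ≤ |F γ r| + |L| := abs_sub _ _
      _ ≤ C + |L| := by gcongr; exact hbdd r γ hγ hγr
      _ ≤ ε * Γ := (div_le_iff₀' hε).1 hΓ
      _ ≤ ε * γ := by gcongr

/-- for `k ≥ 2`, uniform convergence of densities of γ-primitive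
elements: for every `ε > 0` there is `r(ε)` with
`|ρ_r(P_{k,γ}) − 1/(γ^k ζ(k))| ≤ ε/γ^{k−1}` for all `r ≥ r(ε)` and `1 ≤ γ ≤ r`. -/
theorem stmt6 (k : ℕ) (hk : 2 ≤ k) :
    ∀ ε : ℝ, 0 < ε → ∃ R : ℕ, ∀ r : ℕ, R ≤ r → ∀ γ : ℕ, 1 ≤ γ → γ ≤ r →
      |rhoZ k {v | Finset.univ.gcd v = (γ : ℤ)} r - 1 / ((γ : ℝ) ^ k * zetaR k)| ≤
        ε / (γ : ℝ) ^ (k - 1) := by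
  intro ε hε
  obtain ⟨R, hR⟩ := eventually_atTop.1 <| eventually_abs_sub_le_mul_of_tendsto
    (fun γ hγ ↦ tendsto_pow_mul_rhoZ_gcd_eq hk (by omega))
    (fun r γ hγ hγr ↦ abs_pow_mul_rhoZ_gcd_eq_le (by omega) hγr) hε
  refine ⟨R, fun r hr γ hγ hγr ↦ ?_⟩
  have hγk : (0 : ℝ) < γ ^ k := by positivity
  have hscale : rhoZ k {v | univ.gcd v = (γ : ℤ)} r - 1 / ((γ : ℝ) ^ k * zetaR k) =
      ((γ : ℝ) ^ k * rhoZ k {v | univ.gcd v = (γ : ℤ)} r - 1 / zetaR k) / γ ^ k := by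
    field_simp
  calc |rhoZ k {v | univ.gcd v = (γ : ℤ)} r - 1 / ((γ : ℝ) ^ k * zetaR k)|
      = |(γ : ℝ) ^ k * rhoZ k {v | univ.gcd v = (γ : ℤ)} r - 1 / zetaR k| / γ ^ k := by
        rw [hscale, abs_div, abs_of_pos hγk]
    _ ≤ ε * γ / γ ^ k := by gcongr; exact hR r hr γ hγ hγr
    _ = ε / γ ^ (k - 1) := by
        rw [← pow_sub_one_mul (by omega : k ≠ 0)]
        field_simp
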